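/- Let m ≥ n, let Σμ = diag(λ_{μ,1},…,λ_{μ,m}) and Σν = diag(λ_{ν,1},…,λ_{ν,n}) be diagonal matrices with positive non-increasing diagonal entries, let K be an m×n real matrix, and let κ_1 ≥ … ≥ κ_n be the eigenvalues of Σν^{-1/2} Kᵀ Σμ^{-1} K Σν^{-1/2} in non-increasing order. Then tr(Kᵀ K) ≤ Σ_{j=1}^{n} λ_{μ,j} λ_{ν,j} κ_j. -/

import Mathlib

open Matrix

section
open scoped ComplexOrder

/-- The square root of a positive semidefinite matrix, as defined in Mathlib of December 2024
(it has since been removed from Mathlib). -/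
noncomputable def Matrix.PosSemidef.sqrt {n : Type*} [Fintype n] [DecidableEq n] {𝕜 : Type*}
    [RCLike 𝕜] {A : Matrix n n 𝕜} (hA : Matrix.PosSemidef A) : Matrix n n 𝕜 :=
  hA.1.eigenvectorUnitary.1 * diagonal ((↑) ∘ (√·) ∘ hA.1.eigenvalues) *
  (star hA.1.eigenvectorUnitary : Matrix n n 𝕜)

end

namespace Matrix.PosSemidef

lemma sqrt_eq_cfc {N : Type*} [Fintype N] [DecidableEq N] {A : Matrix N N ℝ}
    (hA : A.PosSemidef) : hA.sqrt = cfc Real.sqrt A := by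
  rw [hA.1.cfc_eq]
  rfl

lemma spec_nonneg {N : Type*} [Fintype N] [DecidableEq N] {A : Matrix N N ℝ}
    (hA : A.PosSemidef) : ∀ x ∈ spectrum ℝ A, 0 ≤ x := by
  intro x hx
  rw [hA.1.spectrum_real_eq_range_eigenvalues] at hx
  obtain ⟨i, rfl⟩ := hx
  exact hA.eigenvalues_nonneg i

lemma sqrt_mul_self {N : Type*} [Fintype N] [DecidableEq N] {A : Matrix N N ℝ}
    (hA : A.PosSemidef) : hA.sqrt * hA.sqrt = A := by
  have hsa : IsSelfAdjoint A := hA.1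
  rw [sqrt_eq_cfc, ← cfc_mul Real.sqrt Real.sqrt A]
  conv_rhs => rw [← cfc_id' ℝ A]
  exact cfc_congr fun x hx => Real.mul_self_sqrt (spec_nonneg hA x hx)

lemma posSemidef_sqrt {N : Type*} [Fintype N] [DecidableEq N] {A : Matrix N N ℝ}
    (hA : A.PosSemidef) : hA.sqrt.PosSemidef := by
  unfold Matrix.PosSemidef.sqrt
  have := (Matrix.posSemidef_diagonal_iff.mpr fun i => Real.sqrt_nonneg (hA.1.eigenvalues i) :
    (diagonal ((↑) ∘ (√·) ∘ hA.1.eigenvalues) : Matrix N N ℝ).PosSemidef).mul_mul_conjTranspose_same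
    (hA.1.eigenvectorUnitary.1)
  exact this

lemma eq_sqrt_of_sq_eq {N : Type*} [Fintype N] [DecidableEq N] {A B : Matrix N N ℝ}
    (hA : A.PosSemidef) (hB : B.PosSemidef) (hAB : A ^ 2 = B) : A = hB.sqrt := by
  have hsa : IsSelfAdjoint A := hA.1
  rw [sqrt_eq_cfc, ← hAB, ← cfc_pow_id (R := ℝ) A 2, ← cfc_comp Real.sqrt (· ^ 2) A]
  conv_lhs => rw [← cfc_id' ℝ A]
  exact cfc_congr fun x hx => (Real.sqrt_sq (spec_nonneg hA x hx)).symm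

end Matrix.PosSemidef

namespace TraceCrossCovarianceAux

open Finset

lemma psd_diag_nonneg {N : Type*} [Fintype N] [DecidableEq N] {M : Matrix N N ℝ}
    (hM : M.PosSemidef) (i : N) : 0 ≤ M i i := by
  exact hM.diag_nonneg

lemma psd_trace_nonneg {N : Type*} [Fintype N] [DecidableEq N] {M : Matrix N N ℝ}
    (hM : M.PosSemidef) : 0 ≤ M.trace :=
  Finset.sum_nonneg fun i _ => psd_diag_nonneg hM i

lemma trace_mul_psd_nonneg {N : Type*} [Fintype N] [DecidableEq N] {A B : Matrix N N ℝ}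
    (hA : A.PosSemidef) (hB : B.PosSemidef) : 0 ≤ (A * B).trace := by
  have h1 : A = hA.sqrt * hA.sqrt := (hA.sqrt_mul_self).symm
  have h2 : (A * B).trace = (hA.sqrt * B * hA.sqrtᴴ).trace := by
    rw [hA.posSemidef_sqrt.isHermitian.eq]
    conv_lhs => rw [h1]
    rw [Matrix.mul_assoc, Matrix.trace_mul_comm, Matrix.mul_assoc]
  rw [h2]
  exact psd_trace_nonneg (hB.mul_mul_conjTranspose_same _)

lemma idem_diag_le_one {N : Type*} [Fintype N] [DecidableEq N] {M : Matrix N N ℝ}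
    (hsymm : Mᵀ = M) (hid : M * M = M) (a : N) : M a a ≤ 1 := by
  have h1 : M a a = ∑ b, (M a b)^2 := by
    conv_lhs => rw [← hid]
    rw [Matrix.mul_apply]
    refine Finset.sum_congr rfl fun b _ => ?_
    have h : M b a = M a b := by conv_lhs => rw [← hsymm, Matrix.transpose_apply]
    rw [h]; ring
  have h3 : (M a a)^2 ≤ M a a := by
    conv_rhs => rw [h1]
    exact Finset.single_le_sum (f := fun b => (M a b)^2) (fun b _ => sq_nonneg _)
      (Finset.mem_univ a)
  nlinarith

lemma sum_indicator_le (N k : ℕ) : ∑ j : Fin N, (if (j:ℕ) < k then (1:ℝ) else 0) ≤ k := by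
  rw [Fin.sum_univ_eq_sum_range (fun i => if i < k then (1:ℝ) else 0) N, ← Finset.sum_filter]
  have h : (Finset.range N).filter (fun i => i < k) = Finset.range (min k N) := by
    ext x; simp only [Finset.mem_filter, Finset.mem_range]; omega
  rw [h]
  simp only [Finset.sum_const, Finset.card_range, nsmul_eq_mul, mul_one]
  exact_mod_cast Nat.cast_le.mpr (min_le_left _ _)

lemma sum_indicator_eq (N k : ℕ) (h : k ≤ N) :
    ∑ j : Fin N, (if (j:ℕ) < k then (1:ℝ) else 0) = k := by
  rw [Fin.sum_univ_eq_sum_range (fun i => if i < k then (1:ℝ) else 0) N, ← Finset.sum_filter]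
  have h2 : (Finset.range N).filter (fun i => i < k) = Finset.range k := by
    ext x; simp only [Finset.mem_filter, Finset.mem_range]; omega
  rw [h2]; simp

lemma sum_mul_le_topk {N : ℕ} (κ c : Fin N → ℝ) (k : ℕ)
    (hmono : ∀ i j : Fin N, i ≤ j → κ j ≤ κ i) (hκ0 : ∀ j, 0 ≤ κ j)
    (hc0 : ∀ j, 0 ≤ c j) (hc1 : ∀ j, c j ≤ 1) (hsum : ∑ j, c j ≤ (k:ℝ)) :
    ∑ j, κ j * c j ≤ ∑ j : Fin N, (if (j:ℕ) < k then κ j else 0) := by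
  rcases le_or_gt N k with h | h
  · have hall : ∀ j : Fin N, (j:ℕ) < k := fun j => lt_of_lt_of_le j.2 h
    calc ∑ j, κ j * c j ≤ ∑ j, κ j :=
          Finset.sum_le_sum fun j _ => by nlinarith [hκ0 j, hc1 j, hc0 j]
      _ = _ := Finset.sum_congr rfl fun j _ => by rw [if_pos (hall j)]
  · set θ := κ ⟨k, h⟩ with hθ
    have hθ0 : 0 ≤ θ := hκ0 _
    have step : ∀ j : Fin N, κ j * c j ≤ θ * c j + (if (j:ℕ) < k then κ j - θ else 0) := by
      intro j
      by_cases hj : (j:ℕ) < k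
      · rw [if_pos hj]
        have hθκ : θ ≤ κ j := hmono j ⟨k, h⟩ (by simp [Fin.le_def]; omega)
        nlinarith [hc1 j]
      · rw [if_neg hj]
        have hκθ : κ j ≤ θ := hmono ⟨k, h⟩ j (by simp [Fin.le_def]; omega)
        nlinarith [hc0 j]
    calc ∑ j, κ j * c j
        ≤ ∑ j, (θ * c j + (if (j:ℕ) < k then κ j - θ else 0)) :=
          Finset.sum_le_sum fun j _ => step j
      _ = θ * (∑ j, c j) + ((∑ j : Fin N, (if (j:ℕ) < k then κ j else 0))
            - θ * (∑ j : Fin N, (if (j:ℕ) < k then (1:ℝ) else 0))) := by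
          rw [Finset.sum_add_distrib, Finset.mul_sum, Finset.mul_sum, ← Finset.sum_sub_distrib]
          congr 1
          refine Finset.sum_congr rfl fun j _ => ?_
          by_cases hj : (j:ℕ) < k <;> simp [hj]
      _ ≤ θ * k + ((∑ j : Fin N, (if (j:ℕ) < k then κ j else 0)) - θ * k) := by
          rw [sum_indicator_eq N k (le_of_lt h)]
          have := mul_le_mul_of_nonneg_left hsum hθ0
          linarith
      _ = _ := by ring

section Key

variable {m n : ℕ} (κ : Fin n → ℝ)
  (W : Matrix (Fin m) (Fin n) ℝ) (V : Matrix (Fin n) (Fin n) ℝ)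

/-- trace of `diagonal d * Z`. -/
lemma trace_diagonal_mul {N : Type*} [Fintype N] [DecidableEq N] (d : N → ℝ)
    (Z : Matrix N N ℝ) : (Matrix.diagonal d * Z).trace = ∑ j, d j * Z j j :=
  Finset.sum_congr rfl fun j _ => by rw [Matrix.diag_apply, Matrix.diagonal_mul]

lemma key_bound (hκmono : ∀ i j : Fin n, i ≤ j → κ j ≤ κ i)
    (hV1 : Vᵀ * V = 1) (hV2 : V * Vᵀ = 1) (hWW : Wᵀ * W = Matrix.diagonal κ)
    (k l : ℕ) :
    ((Wᵀ * Matrix.diagonal (fun i : Fin m => if (i:ℕ) < k then (1:ℝ) else 0) * W) *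
     (Vᵀ * Matrix.diagonal (fun j : Fin n => if (j:ℕ) < l then (1:ℝ) else 0) * V)).trace
      ≤ ∑ j : Fin n, if (j:ℕ) < min k l then κ j else 0 := by
  classical
  set P : Matrix (Fin m) (Fin m) ℝ :=
    Matrix.diagonal (fun i : Fin m => if (i:ℕ) < k then (1:ℝ) else 0) with hP
  set Q : Matrix (Fin n) (Fin n) ℝ :=
    Matrix.diagonal (fun j : Fin n => if (j:ℕ) < l then (1:ℝ) else 0) with hQ
  set X : Matrix (Fin n) (Fin n) ℝ := Wᵀ * P * W with hX
  set Y : Matrix (Fin n) (Fin n) ℝ := Vᵀ * Q * V with hY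
  -- basic facts
  have hκ0 : ∀ j, 0 ≤ κ j := by
    intro j
    have h := congrFun (congrFun hWW j) j
    rw [Matrix.mul_apply, Matrix.diagonal_apply_eq] at h
    rw [← h]
    exact Finset.sum_nonneg fun a _ => mul_self_nonneg _
  have hPpsd : P.PosSemidef := Matrix.posSemidef_diagonal_iff.mpr fun i => by positivity
  have hQpsd : Q.PosSemidef := Matrix.posSemidef_diagonal_iff.mpr fun i => by positivity
  have h1P : ((1 : Matrix (Fin m) (Fin m) ℝ) - P).PosSemidef := by
    rw [hP, ← Matrix.diagonal_one, Matrix.diagonal_sub]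
    refine Matrix.posSemidef_diagonal_iff.mpr fun i => ?_
    by_cases hi : (i:ℕ) < k <;> simp [hi]
  have h1Q : ((1 : Matrix (Fin n) (Fin n) ℝ) - Q).PosSemidef := by
    rw [hQ, ← Matrix.diagonal_one, Matrix.diagonal_sub]
    refine Matrix.posSemidef_diagonal_iff.mpr fun i => ?_
    by_cases hi : (i:ℕ) < l <;> simp [hi]
  have sandwichW : ∀ {Z : Matrix (Fin m) (Fin m) ℝ}, Z.PosSemidef →
      (Wᵀ * Z * W).PosSemidef := by
    intro Z hZ
    have := hZ.conjTranspose_mul_mul_same W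
    simpa [Matrix.conjTranspose_eq_transpose_of_trivial] using this
  have sandwichV : ∀ {Z : Matrix (Fin n) (Fin n) ℝ}, Z.PosSemidef →
      (Vᵀ * Z * V).PosSemidef := by
    intro Z hZ
    have := hZ.conjTranspose_mul_mul_same V
    simpa [Matrix.conjTranspose_eq_transpose_of_trivial] using this
  have hXpsd : X.PosSemidef := sandwichW hPpsd
  have hYpsd : Y.PosSemidef := sandwichV hQpsd
  have hdiffX : Matrix.diagonal κ - X = Wᵀ * (1 - P) * W := by
    rw [Matrix.mul_sub, Matrix.mul_one, Matrix.sub_mul, hWW, hX]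
  have hdiffY : (1 : Matrix (Fin n) (Fin n) ℝ) - Y = Vᵀ * (1 - Q) * V := by
    rw [Matrix.mul_sub, Matrix.mul_one, Matrix.sub_mul, hV1, hY]
  -- bound (a) : trace (X * Y) ≤ T l
  have bound_a : (X * Y).trace ≤ ∑ j : Fin n, if (j:ℕ) < l then κ j else 0 := by
    have h0 : 0 ≤ ((Matrix.diagonal κ - X) * Y).trace := by
      rw [hdiffX]; exact trace_mul_psd_nonneg (sandwichW h1P) hYpsd
    rw [Matrix.sub_mul, Matrix.trace_sub] at h0
    have h1 : (X * Y).trace ≤ (Matrix.diagonal κ * Y).trace := by linarith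
    have h2 : (Matrix.diagonal κ * Y).trace = ∑ j, κ j * Y j j := trace_diagonal_mul κ Y
    have hc0 : ∀ j, 0 ≤ Y j j := fun j => psd_diag_nonneg hYpsd j
    have hc1 : ∀ j, Y j j ≤ 1 := by
      intro j
      have := psd_diag_nonneg (sandwichV h1Q) j
      rw [← hdiffY, Matrix.sub_apply, Matrix.one_apply_eq] at this
      linarith
    have hsum : ∑ j, Y j j ≤ (l : ℝ) := by
      have e1 : ∑ j, Y j j = Y.trace := rfl
      have e2 : Y.trace = (Q * (V * Vᵀ)).trace := by
        rw [hY, Matrix.mul_assoc, Matrix.trace_mul_comm, Matrix.mul_assoc]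
      rw [e1, e2, hV2, Matrix.mul_one, hQ, Matrix.trace_diagonal]
      exact sum_indicator_le n l
    calc (X * Y).trace ≤ ∑ j, κ j * Y j j := by rw [← h2]; exact h1
      _ ≤ _ := sum_mul_le_topk κ (fun j => Y j j) l hκmono hκ0 hc0 hc1 hsum
  -- bound (b) : trace (X * Y) ≤ T k
  have bound_b : (X * Y).trace ≤ ∑ j : Fin n, if (j:ℕ) < k then κ j else 0 := by
    have h0 : 0 ≤ (X * (1 - Y)).trace := by
      rw [hdiffY]; exact trace_mul_psd_nonneg hXpsd (sandwichV h1Q)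
    rw [Matrix.mul_sub, Matrix.mul_one, Matrix.trace_sub] at h0
    have h1 : (X * Y).trace ≤ X.trace := by linarith
    -- diagonal entries of X
    have hXdiag : ∀ j, X j j =
        ∑ a : Fin m, (if (a:ℕ) < k then (1:ℝ) else 0) * (W a j)^2 := by
      intro j
      rw [hX, hP, Matrix.mul_apply]
      refine Finset.sum_congr rfl fun a _ => ?_
      rw [Matrix.mul_diagonal, Matrix.transpose_apply]
      ring
    have hκdiag : ∀ j, κ j = ∑ a : Fin m, (W a j)^2 := by
      intro j
      have h := congrFun (congrFun hWW j) j
      rw [Matrix.mul_apply, Matrix.diagonal_apply_eq] at h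
      rw [← h]
      exact Finset.sum_congr rfl fun a _ => by rw [Matrix.transpose_apply]; ring
    have hX0 : ∀ j, 0 ≤ X j j := fun j => psd_diag_nonneg hXpsd j
    have hXκ : ∀ j, X j j ≤ κ j := by
      intro j
      rw [hXdiag j, hκdiag j]
      refine Finset.sum_le_sum fun a _ => ?_
      by_cases ha : (a:ℕ) < k <;> simp [ha] <;> positivity
    set κ' : Fin n → ℝ := fun j => if κ j = 0 then 0 else (κ j)⁻¹ with hκ'
    have hκ'0 : ∀ j, 0 ≤ κ' j := by
      intro j; rw [hκ']; dsimp only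
      by_cases hj : κ j = 0
      · rw [if_pos hj]
      · rw [if_neg hj]; exact inv_nonneg.mpr (hκ0 j)
    set c : Fin n → ℝ := fun j => X j j * κ' j with hc
    have hκc : ∀ j, κ j * c j = X j j := by
      intro j
      have hcj : c j = X j j * κ' j := rfl
      rw [hcj, hκ']; dsimp only
      by_cases hj : κ j = 0
      · have hX : X j j = 0 := le_antisymm (hj ▸ hXκ j) (hX0 j)
        rw [if_pos hj, hX]; ring
      · rw [if_neg hj]
        calc κ j * (X j j * (κ j)⁻¹) = (κ j * (κ j)⁻¹) * X j j := by ring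
          _ = X j j := by rw [mul_inv_cancel₀ hj, one_mul]
    have hc0 : ∀ j, 0 ≤ c j := fun j => mul_nonneg (hX0 j) (hκ'0 j)
    have hc1 : ∀ j, c j ≤ 1 := by
      intro j; rw [hc]; dsimp only; rw [hκ']; dsimp only
      by_cases hj : κ j = 0
      · simp [hj]
      · have hκpos : 0 < κ j := lt_of_le_of_ne (hκ0 j) (Ne.symm hj)
        rw [if_neg hj, ← div_eq_mul_inv, div_le_one hκpos]
        exact hXκ j
    -- the projection matrix N
    set Nm : Matrix (Fin m) (Fin m) ℝ := W * Matrix.diagonal κ' * Wᵀ with hNm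
    have hNsymm : Nmᵀ = Nm := by
      rw [hNm]
      simp [Matrix.transpose_mul, Matrix.diagonal_transpose, Matrix.mul_assoc]
    have hNidem : Nm * Nm = Nm := by
      rw [hNm]
      have e1 : W * Matrix.diagonal κ' * Wᵀ * (W * Matrix.diagonal κ' * Wᵀ)
          = W * (Matrix.diagonal κ' * ((Wᵀ * W) * (Matrix.diagonal κ' * Wᵀ))) := by
        simp only [Matrix.mul_assoc]
      rw [e1, hWW, ← Matrix.mul_assoc (Matrix.diagonal κ) (Matrix.diagonal κ') Wᵀ,
        Matrix.diagonal_mul_diagonal, ← Matrix.mul_assoc (Matrix.diagonal κ'),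
        Matrix.diagonal_mul_diagonal]
      have e2 : (fun j => κ' j * (κ j * κ' j)) = κ' := by
        funext j; rw [hκ']; dsimp only
        by_cases hj : κ j = 0
        · rw [if_pos hj]; ring
        · rw [if_neg hj]
          calc (κ j)⁻¹ * (κ j * (κ j)⁻¹) = (κ j * (κ j)⁻¹) * (κ j)⁻¹ := by ring
            _ = (κ j)⁻¹ := by rw [mul_inv_cancel₀ hj, one_mul]
      rw [e2, Matrix.mul_assoc]
    have hNdiag : ∀ a, Nm a a ≤ 1 := fun a => idem_diag_le_one hNsymm hNidem a
    have hNdiag_eq : ∀ a, Nm a a = ∑ j, (W a j)^2 * κ' j := by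
      intro a
      rw [hNm, Matrix.mul_apply]
      refine Finset.sum_congr rfl fun j _ => ?_
      rw [Matrix.mul_diagonal, Matrix.transpose_apply]
      ring
    have hsum : ∑ j, c j ≤ (k : ℝ) := by
      have e1 : ∑ j, c j
          = ∑ a : Fin m, (if (a:ℕ) < k then (1:ℝ) else 0) * Nm a a := by
        calc ∑ j, c j
            = ∑ j : Fin n, ∑ a : Fin m, (if (a:ℕ) < k then (1:ℝ) else 0) * ((W a j)^2 * κ' j) := by
              refine Finset.sum_congr rfl fun j _ => ?_
              rw [hc]; dsimp only; rw [hXdiag j, Finset.sum_mul]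
              exact Finset.sum_congr rfl fun a _ => by ring
          _ = ∑ a : Fin m, ∑ j : Fin n, (if (a:ℕ) < k then (1:ℝ) else 0) * ((W a j)^2 * κ' j) :=
              Finset.sum_comm
          _ = _ := by
              refine Finset.sum_congr rfl fun a _ => ?_
              rw [hNdiag_eq a, Finset.mul_sum]
      rw [e1]
      calc ∑ a : Fin m, (if (a:ℕ) < k then (1:ℝ) else 0) * Nm a a
          ≤ ∑ a : Fin m, (if (a:ℕ) < k then (1:ℝ) else 0) := by
            refine Finset.sum_le_sum fun a _ => ?_
            by_cases ha : (a:ℕ) < k <;> simp [ha]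
            exact hNdiag a
        _ ≤ k := sum_indicator_le m k
    have htrX : X.trace = ∑ j, κ j * c j := by
      rw [Matrix.trace]
      exact Finset.sum_congr rfl fun j _ => by rw [Matrix.diag_apply, hκc j]
    calc (X * Y).trace ≤ X.trace := h1
      _ = ∑ j, κ j * c j := htrX
      _ ≤ _ := sum_mul_le_topk κ c k hκmono hκ0 hc0 hc1 hsum
  -- combine
  rcases le_total k l with hkl | hkl
  · have : min k l = k := min_eq_left hkl
    rw [this]; exact bound_b
  · have : min k l = l := min_eq_right hkl
    rw [this]; exact bound_a

end Key
theorem main_ineq {m n : ℕ} (hmn : n ≤ m) (lμ : Fin m → ℝ) (lν : Fin n → ℝ) (κ : Fin n → ℝ)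
    (hlμpos : ∀ i, 0 < lμ i) (hlνpos : ∀ j, 0 < lν j)
    (hlμmono : ∀ i j : Fin m, i ≤ j → lμ j ≤ lμ i)
    (hlνmono : ∀ i j : Fin n, i ≤ j → lν j ≤ lν i)
    (hκmono : ∀ i j : Fin n, i ≤ j → κ j ≤ κ i)
    (W : Matrix (Fin m) (Fin n) ℝ) (V : Matrix (Fin n) (Fin n) ℝ)
    (hV1 : Vᵀ * V = 1) (hV2 : V * Vᵀ = 1) (hWW : Wᵀ * W = Matrix.diagonal κ) :
    ((Wᵀ * Matrix.diagonal lμ * W) * (Vᵀ * Matrix.diagonal lν * V)).trace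
      ≤ ∑ j : Fin n, lμ (Fin.castLE hmn j) * lν j * κ j := by
  classical
  set gμ : ℕ → ℝ := fun p => if h : p < m then lμ ⟨p, h⟩ else 0 with hgμ
  set gν : ℕ → ℝ := fun q => if h : q < n then lν ⟨q, h⟩ else 0 with hgν
  set δμ : ℕ → ℝ := fun p => gμ p - gμ (p+1) with hδμ
  set δν : ℕ → ℝ := fun q => gν q - gν (q+1) with hδν
  have hgμ0 : ∀ p, 0 ≤ gμ p := by
    intro p; rw [hgμ]; dsimp only
    by_cases h : p < m
    · rw [dif_pos h]; exact (hlμpos _).le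
    · rw [dif_neg h]
  have hgν0 : ∀ q, 0 ≤ gν q := by
    intro q; rw [hgν]; dsimp only
    by_cases h : q < n
    · rw [dif_pos h]; exact (hlνpos _).le
    · rw [dif_neg h]
  have hδμ0 : ∀ p, 0 ≤ δμ p := by
    intro p; rw [hδμ]; dsimp only
    by_cases h1 : p + 1 < m
    · have h0 : p < m := by omega
      rw [hgμ]; dsimp only; rw [dif_pos h1, dif_pos h0, sub_nonneg]
      exact hlμmono ⟨p, h0⟩ ⟨p+1, h1⟩ (by simp [Fin.le_def])
    · rw [hgμ]; dsimp only [hgμ]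
      rw [dif_neg h1, sub_zero]
      exact hgμ0 p
  have hδν0 : ∀ q, 0 ≤ δν q := by
    intro q; rw [hδν]; dsimp only
    by_cases h1 : q + 1 < n
    · have h0 : q < n := by omega
      rw [hgν]; dsimp only; rw [dif_pos h1, dif_pos h0, sub_nonneg]
      exact hlνmono ⟨q, h0⟩ ⟨q+1, h1⟩ (by simp [Fin.le_def])
    · rw [hgν]; dsimp only [hgν]
      rw [dif_neg h1, sub_zero]
      exact hgν0 q
  -- telescoping decomposition
  have hgdecompμ : ∀ i : Fin m,
      ∑ p ∈ range m, δμ p * (if (i:ℕ) < p+1 then (1:ℝ) else 0) = lμ i := by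
    intro i
    have e1 : ∀ p ∈ range m, δμ p * (if (i:ℕ) < p+1 then (1:ℝ) else 0)
        = if (i:ℕ) ≤ p then δμ p else 0 := by
      intro p _
      by_cases h : (i:ℕ) ≤ p
      · rw [if_pos h, if_pos (by omega), mul_one]
      · rw [if_neg h, if_neg (by omega), mul_zero]
    rw [Finset.sum_congr rfl e1, ← Finset.sum_filter]
    have e2 : (range m).filter (fun p => (i:ℕ) ≤ p) = Finset.Ico (i:ℕ) m := by
      ext x
      simp only [Finset.mem_filter, Finset.mem_range, Finset.mem_Ico]
      omega
    rw [e2, Finset.sum_Ico_eq_sub _ (le_of_lt i.2)]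
    have e3 : ∀ N' : ℕ, ∑ p ∈ range N', δμ p = gμ 0 - gμ N' := by
      intro N'
      rw [hδμ]
      exact Finset.sum_range_sub' gμ N'
    rw [e3, e3]
    have e4 : gμ m = 0 := by rw [hgμ]; exact dif_neg (lt_irrefl m)
    have e5 : gμ (i:ℕ) = lμ i := by
      rw [hgμ]; dsimp only; rw [dif_pos i.2]
    rw [e4, e5]
    ring
  have hgdecompν : ∀ j : Fin n,
      ∑ q ∈ range n, δν q * (if (j:ℕ) < q+1 then (1:ℝ) else 0) = lν j := by
    intro j
    have e1 : ∀ q ∈ range n, δν q * (if (j:ℕ) < q+1 then (1:ℝ) else 0)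
        = if (j:ℕ) ≤ q then δν q else 0 := by
      intro q _
      by_cases h : (j:ℕ) ≤ q
      · rw [if_pos h, if_pos (by omega), mul_one]
      · rw [if_neg h, if_neg (by omega), mul_zero]
    rw [Finset.sum_congr rfl e1, ← Finset.sum_filter]
    have e2 : (range n).filter (fun q => (j:ℕ) ≤ q) = Finset.Ico (j:ℕ) n := by
      ext x
      simp only [Finset.mem_filter, Finset.mem_range, Finset.mem_Ico]
      omega
    rw [e2, Finset.sum_Ico_eq_sub _ (le_of_lt j.2)]
    have e3 : ∀ N' : ℕ, ∑ q ∈ range N', δν q = gν 0 - gν N' := by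
      intro N'
      rw [hδν]
      exact Finset.sum_range_sub' gν N'
    rw [e3, e3]
    have e4 : gν n = 0 := by rw [hgν]; exact dif_neg (lt_irrefl n)
    have e5 : gν (j:ℕ) = lν j := by
      rw [hgν]; dsimp only; rw [dif_pos j.2]
    rw [e4, e5]
    ring
  -- matrix decompositions
  have hSμdec : Matrix.diagonal lμ = ∑ p ∈ range m,
      δμ p • Matrix.diagonal (fun i : Fin m => if (i:ℕ) < p+1 then (1:ℝ) else 0) := by
    ext i i'
    rw [Matrix.sum_apply]
    by_cases hii : i = i'
    · subst hii
      rw [Matrix.diagonal_apply_eq]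
      rw [← hgdecompμ i]
      refine Finset.sum_congr rfl fun p _ => ?_
      rw [Matrix.smul_apply, Matrix.diagonal_apply_eq, smul_eq_mul]
    · rw [Matrix.diagonal_apply_ne _ hii]
      symm
      refine Finset.sum_eq_zero fun p _ => ?_
      rw [Matrix.smul_apply, Matrix.diagonal_apply_ne _ hii, smul_zero]
  have hSνdec : Matrix.diagonal lν = ∑ q ∈ range n,
      δν q • Matrix.diagonal (fun j : Fin n => if (j:ℕ) < q+1 then (1:ℝ) else 0) := by
    ext j j'
    rw [Matrix.sum_apply]
    by_cases hjj : j = j'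
    · subst hjj
      rw [Matrix.diagonal_apply_eq]
      rw [← hgdecompν j]
      refine Finset.sum_congr rfl fun q _ => ?_
      rw [Matrix.smul_apply, Matrix.diagonal_apply_eq, smul_eq_mul]
    · rw [Matrix.diagonal_apply_ne _ hjj]
      symm
      refine Finset.sum_eq_zero fun q _ => ?_
      rw [Matrix.smul_apply, Matrix.diagonal_apply_ne _ hjj, smul_zero]
  have hG : Wᵀ * Matrix.diagonal lμ * W = ∑ p ∈ range m,
      δμ p • (Wᵀ * Matrix.diagonal (fun i : Fin m => if (i:ℕ) < p+1 then (1:ℝ) else 0) * W) := by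
    rw [hSμdec, Matrix.mul_sum, Matrix.sum_mul]
    refine Finset.sum_congr rfl fun p _ => ?_
    rw [Matrix.mul_smul, Matrix.smul_mul]
  have hH : Vᵀ * Matrix.diagonal lν * V = ∑ q ∈ range n,
      δν q • (Vᵀ * Matrix.diagonal (fun j : Fin n => if (j:ℕ) < q+1 then (1:ℝ) else 0) * V) := by
    rw [hSνdec, Matrix.mul_sum, Matrix.sum_mul]
    refine Finset.sum_congr rfl fun q _ => ?_
    rw [Matrix.mul_smul, Matrix.smul_mul]
  -- expansion of the trace
  have htrexp : ((Wᵀ * Matrix.diagonal lμ * W) * (Vᵀ * Matrix.diagonal lν * V)).trace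
      = ∑ p ∈ range m, ∑ q ∈ range n, (δμ p * δν q) *
        ((Wᵀ * Matrix.diagonal (fun i : Fin m => if (i:ℕ) < p+1 then (1:ℝ) else 0) * W) *
         (Vᵀ * Matrix.diagonal (fun j : Fin n => if (j:ℕ) < q+1 then (1:ℝ) else 0) * V)).trace := by
    rw [hG, hH, Matrix.sum_mul, Matrix.trace_sum]
    refine Finset.sum_congr rfl fun p _ => ?_
    rw [Matrix.smul_mul, Matrix.trace_smul, Matrix.mul_sum, Matrix.trace_sum]
    simp only [Matrix.mul_smul, Matrix.trace_smul, smul_eq_mul]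
    rw [Finset.mul_sum]
    refine Finset.sum_congr rfl fun q _ => ?_
    ring
  -- right-hand side identity
  have hRHS : ∑ j : Fin n, lμ (Fin.castLE hmn j) * lν j * κ j
      = ∑ p ∈ range m, ∑ q ∈ range n, (δμ p * δν q) *
        (∑ j : Fin n, if (j:ℕ) < min (p+1) (q+1) then κ j else 0) := by
    have step1 : ∀ j : Fin n, lμ (Fin.castLE hmn j) * lν j * κ j
        = ∑ p ∈ range m, ∑ q ∈ range n,
            (δμ p * (if (j:ℕ) < p+1 then (1:ℝ) else 0))
              * (δν q * (if (j:ℕ) < q+1 then (1:ℝ) else 0)) * κ j := by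
      intro j
      have hμj := hgdecompμ (Fin.castLE hmn j)
      simp only [Fin.coe_castLE] at hμj
      conv_lhs => rw [← hμj, ← hgdecompν j]
      rw [Finset.sum_mul_sum, Finset.sum_mul]
      refine Finset.sum_congr rfl fun p _ => ?_
      rw [Finset.sum_mul]
    calc ∑ j : Fin n, lμ (Fin.castLE hmn j) * lν j * κ j
        = ∑ j : Fin n, ∑ p ∈ range m, ∑ q ∈ range n,
            (δμ p * (if (j:ℕ) < p+1 then (1:ℝ) else 0))
              * (δν q * (if (j:ℕ) < q+1 then (1:ℝ) else 0)) * κ j :=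
          Finset.sum_congr rfl fun j _ => step1 j
      _ = ∑ p ∈ range m, ∑ j : Fin n, ∑ q ∈ range n,
            (δμ p * (if (j:ℕ) < p+1 then (1:ℝ) else 0))
              * (δν q * (if (j:ℕ) < q+1 then (1:ℝ) else 0)) * κ j := Finset.sum_comm
      _ = ∑ p ∈ range m, ∑ q ∈ range n, ∑ j : Fin n,
            (δμ p * (if (j:ℕ) < p+1 then (1:ℝ) else 0))
              * (δν q * (if (j:ℕ) < q+1 then (1:ℝ) else 0)) * κ j :=
          Finset.sum_congr rfl fun p _ => Finset.sum_comm
      _ = _ := by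
          refine Finset.sum_congr rfl fun p _ => Finset.sum_congr rfl fun q _ => ?_
          rw [Finset.mul_sum]
          refine Finset.sum_congr rfl fun j _ => ?_
          by_cases h1 : (j:ℕ) < p+1 <;> by_cases h2 : (j:ℕ) < q+1 <;>
            simp only [h1, h2, lt_min_iff, and_self, and_false, false_and, ↓reduceIte] <;> ring
  -- conclusion
  rw [htrexp, hRHS]
  refine Finset.sum_le_sum fun p _ => Finset.sum_le_sum fun q _ => ?_
  exact mul_le_mul_of_nonneg_left
    (key_bound κ W V hκmono hV1 hV2 hWW (p+1) (q+1))
    (mul_nonneg (hδμ0 p) (hδν0 q))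

end TraceCrossCovarianceAux

/-- von Neumann-type trace bound.  Let `Sμ = diag(lμ)`, `Sν = diag(lν)` be
diagonal with positive non-increasing entries (`n ≤ m`), `K` an `m×n` matrix, and let
`κ` enumerate the eigenvalues of `Sν^{-1/2} Kᵀ Sμ⁻¹ K Sν^{-1/2}` in non-increasing order.
Then `tr(Kᵀ K) ≤ ∑_j lμ_j lν_j κ_j`. -/
theorem trace_cross_covariance_le
    (m n : ℕ) (hmn : n ≤ m)
    (lμ : Fin m → ℝ) (lν : Fin n → ℝ)
    (hlμpos : ∀ i, 0 < lμ i) (hlνpos : ∀ j, 0 < lν j)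
    (hlμmono : ∀ i j : Fin m, i ≤ j → lμ j ≤ lμ i)
    (hlνmono : ∀ i j : Fin n, i ≤ j → lν j ≤ lν i)
    (K : Matrix (Fin m) (Fin n) ℝ)
    (hSν : (Matrix.diagonal lν).PosDef)
    (M : Matrix (Fin n) (Fin n) ℝ)
    (hMdef : M = (hSν.posSemidef.sqrt)⁻¹ * Kᵀ * (Matrix.diagonal lμ)⁻¹ * K *
      (hSν.posSemidef.sqrt)⁻¹)
    (hM : M.IsHermitian)
    (κ : Fin n → ℝ)
    (hκmono : ∀ i j : Fin n, i ≤ j → κ j ≤ κ i)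
    (hκ : ∃ σ : Equiv.Perm (Fin n), κ = hM.eigenvalues ∘ σ) :
    Matrix.trace (Kᵀ * K) ≤ ∑ j : Fin n, lμ (Fin.castLE hmn j) * lν j * κ j := by
  classical
  obtain ⟨σ, hσ⟩ := hκ
  set eμ : Fin m → ℝ := fun i => Real.sqrt (lμ i) with heμ
  set eν : Fin n → ℝ := fun j => Real.sqrt (lν j) with heν
  have heμpos : ∀ i, 0 < eμ i := fun i => Real.sqrt_pos.mpr (hlμpos i)
  have heνpos : ∀ j, 0 < eν j := fun j => Real.sqrt_pos.mpr (hlνpos j)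
  have heμsq : ∀ i, eμ i * eμ i = lμ i := fun i => Real.mul_self_sqrt (hlμpos i).le
  have heνsq : ∀ j, eν j * eν j = lν j := fun j => Real.mul_self_sqrt (hlνpos j).le
  set Dμ : Matrix (Fin m) (Fin m) ℝ := Matrix.diagonal eμ with hDμ
  set Dν : Matrix (Fin n) (Fin n) ℝ := Matrix.diagonal eν with hDν
  set Dμi : Matrix (Fin m) (Fin m) ℝ := Matrix.diagonal (fun i => (eμ i)⁻¹) with hDμi
  set Dνi : Matrix (Fin n) (Fin n) ℝ := Matrix.diagonal (fun j => (eν j)⁻¹) with hDνi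
  have hDμDμi : Dμ * Dμi = 1 := by
    rw [hDμ, hDμi, Matrix.diagonal_mul_diagonal, ← Matrix.diagonal_one]
    have h : (fun i => eμ i * (eμ i)⁻¹) = fun _ : Fin m => (1:ℝ) :=
      funext fun i => mul_inv_cancel₀ (heμpos i).ne'
    rw [h]
  have hDμiDμ : Dμi * Dμ = 1 := by
    rw [hDμ, hDμi, Matrix.diagonal_mul_diagonal, ← Matrix.diagonal_one]
    have h : (fun i => (eμ i)⁻¹ * eμ i) = fun _ : Fin m => (1:ℝ) :=
      funext fun i => inv_mul_cancel₀ (heμpos i).ne'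
    rw [h]
  have hDνDνi : Dν * Dνi = 1 := by
    rw [hDν, hDνi, Matrix.diagonal_mul_diagonal, ← Matrix.diagonal_one]
    have h : (fun j => eν j * (eν j)⁻¹) = fun _ : Fin n => (1:ℝ) :=
      funext fun j => mul_inv_cancel₀ (heνpos j).ne'
    rw [h]
  have hDνiDν : Dνi * Dν = 1 := by
    rw [hDν, hDνi, Matrix.diagonal_mul_diagonal, ← Matrix.diagonal_one]
    have h : (fun j => (eν j)⁻¹ * eν j) = fun _ : Fin n => (1:ℝ) :=
      funext fun j => inv_mul_cancel₀ (heνpos j).ne'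
    rw [h]
  -- identify the square root and inverses
  have hsqrt : hSν.posSemidef.sqrt = Dν := by
    have hpsd : Dν.PosSemidef := by
      rw [hDν]
      exact Matrix.posSemidef_diagonal_iff.mpr fun j => Real.sqrt_nonneg _
    refine (hpsd.eq_sqrt_of_sq_eq hSν.posSemidef ?_).symm
    rw [sq, hDν, Matrix.diagonal_mul_diagonal]
    have h2 : (fun i => eν i * eν i) = lν := funext fun j => heνsq j
    rw [h2]
  have hsqrtinv : (hSν.posSemidef.sqrt)⁻¹ = Dνi := by
    rw [hsqrt]
    exact Matrix.inv_eq_right_inv hDνDνi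
  have hSμinv : (Matrix.diagonal lμ)⁻¹ = Dμi * Dμi := by
    refine Matrix.inv_eq_right_inv ?_
    rw [hDμi, Matrix.diagonal_mul_diagonal, Matrix.diagonal_mul_diagonal, ← Matrix.diagonal_one]
    have h : (fun i => lμ i * ((eμ i)⁻¹ * (eμ i)⁻¹)) = fun _ : Fin m => (1:ℝ) := by
      funext i
      have hne : eμ i * eμ i ≠ 0 := by
        have := heμpos i
        positivity
      rw [← heμsq i, ← mul_inv, mul_inv_cancel₀ hne]
    rw [h]
  -- A and its relation to K and M
  set A : Matrix (Fin m) (Fin n) ℝ := Dμi * K * Dνi with hA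
  have hMA : M = Aᵀ * A := by
    rw [hMdef, hsqrtinv, hSμinv, hA]
    simp only [Matrix.transpose_mul, Matrix.diagonal_transpose, hDμi, hDνi,
      Matrix.transpose_transpose]
    simp only [Matrix.mul_assoc]
  have hKA : K = Dμ * A * Dν := by
    rw [hA]
    calc K = (Dμ * Dμi) * K * (Dνi * Dν) := by rw [hDμDμi, hDνiDν, Matrix.one_mul, Matrix.mul_one]
      _ = Dμ * (Dμi * K * Dνi) * Dν := by simp only [Matrix.mul_assoc]
  -- spectral decomposition
  set V0 : Matrix (Fin n) (Fin n) ℝ := (hM.eigenvectorUnitary : Matrix (Fin n) (Fin n) ℝ) with hV0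
  have hspec : M = V0 * Matrix.diagonal hM.eigenvalues * V0ᵀ := by
    have h := hM.spectral_theorem
    simpa [Matrix.star_eq_conjTranspose, Matrix.conjTranspose_eq_transpose_of_trivial,
      Function.comp] using h
  have hV01 : V0ᵀ * V0 = 1 := by
    have h1 := Unitary.star_mul_self_of_mem hM.eigenvectorUnitary.2
    simpa [Matrix.star_eq_conjTranspose, Matrix.conjTranspose_eq_transpose_of_trivial] using h1
  have hV02 : V0 * V0ᵀ = 1 := by
    have h2 := Unitary.mul_star_self_of_mem hM.eigenvectorUnitary.2
    simpa [Matrix.star_eq_conjTranspose, Matrix.conjTranspose_eq_transpose_of_trivial] using h2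
  set V : Matrix (Fin n) (Fin n) ℝ := V0.submatrix id σ with hV
  have hVapp : ∀ a j, V a j = V0 a (σ j) := fun a j => rfl
  have hV1 : Vᵀ * V = 1 := by
    ext j k
    rw [Matrix.mul_apply]
    have h := congrFun (congrFun hV01 (σ j)) (σ k)
    rw [Matrix.mul_apply] at h
    simp only [Matrix.transpose_apply] at h
    simp only [Matrix.transpose_apply, hVapp]
    rw [h, Matrix.one_apply, Matrix.one_apply]
    by_cases hjk : j = k
    · simp [hjk]
    · rw [if_neg (fun hc => hjk (σ.injective hc)), if_neg hjk]
  have hV2 : V * Vᵀ = 1 := by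
    ext a b
    rw [Matrix.mul_apply]
    have h := congrFun (congrFun hV02 a) b
    rw [Matrix.mul_apply] at h
    simp only [Matrix.transpose_apply] at h
    simp only [Matrix.transpose_apply, hVapp]
    rw [← h]
    exact Equiv.sum_comp σ (fun k => V0 a k * V0 b k)
  have hMV : M = V * Matrix.diagonal κ * Vᵀ := by
    ext a b
    rw [Matrix.mul_apply]
    have e1 : ∀ j, (V * Matrix.diagonal κ) a j = V a j * κ j :=
      fun j => Matrix.mul_diagonal _ _ _ _
    calc M a b = (V0 * Matrix.diagonal hM.eigenvalues * V0ᵀ) a b := by rw [← hspec]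
      _ = ∑ k, V0 a k * hM.eigenvalues k * V0 b k := by
          rw [Matrix.mul_apply]
          exact Finset.sum_congr rfl fun k _ => by
            rw [Matrix.mul_diagonal, Matrix.transpose_apply]
      _ = ∑ j, V0 a (σ j) * hM.eigenvalues (σ j) * V0 b (σ j) :=
          (Equiv.sum_comp σ (fun k => V0 a k * hM.eigenvalues k * V0 b k)).symm
      _ = ∑ j, (V * Matrix.diagonal κ) a j * Vᵀ j b := by
          refine Finset.sum_congr rfl fun j _ => ?_
          rw [e1 j, Matrix.transpose_apply, hVapp, hσ]
          rfl
  -- W and its Gram matrix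
  set W : Matrix (Fin m) (Fin n) ℝ := A * V with hW
  have hWW : Wᵀ * W = Matrix.diagonal κ := by
    have e1 : Wᵀ * W = Vᵀ * (Aᵀ * A) * V := by
      rw [hW, Matrix.transpose_mul]
      simp only [Matrix.mul_assoc]
    rw [e1, ← hMA, hMV]
    calc Vᵀ * (V * Matrix.diagonal κ * Vᵀ) * V
        = (Vᵀ * V) * Matrix.diagonal κ * (Vᵀ * V) := by simp only [Matrix.mul_assoc]
      _ = Matrix.diagonal κ := by rw [hV1, Matrix.one_mul, Matrix.mul_one]
  -- trace identity
  have hAWV : A = W * Vᵀ := by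
    rw [hW, Matrix.mul_assoc, hV2, Matrix.mul_one]
  have hKW : K = Dμ * W * Vᵀ * Dν := by
    rw [hKA, hAWV]
    simp only [Matrix.mul_assoc]
  have htr : (Kᵀ * K).trace
      = ((Wᵀ * Matrix.diagonal lμ * W) * (Vᵀ * Matrix.diagonal lν * V)).trace := by
    have e1 : Kᵀ * K = (Dν * V * (Wᵀ * (Dμ * Dμ) * W)) * (Vᵀ * Dν) := by
      rw [hKW]
      simp only [Matrix.transpose_mul, Matrix.transpose_transpose, hDμ, hDν,
        Matrix.diagonal_transpose]
      simp only [Matrix.mul_assoc]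
    have e2 : Dμ * Dμ = Matrix.diagonal lμ := by
      rw [hDμ, Matrix.diagonal_mul_diagonal]
      have h : (fun i => eμ i * eμ i) = lμ := funext fun i => heμsq i
      rw [h]
    have e3 : Dν * Dν = Matrix.diagonal lν := by
      rw [hDν, Matrix.diagonal_mul_diagonal]
      have h : (fun j => eν j * eν j) = lν := funext fun j => heνsq j
      rw [h]
    calc (Kᵀ * K).trace
        = ((Dν * V * (Wᵀ * (Dμ * Dμ) * W)) * (Vᵀ * Dν)).trace := by rw [e1]
      _ = ((Vᵀ * Dν) * (Dν * V * (Wᵀ * (Dμ * Dμ) * W))).trace := Matrix.trace_mul_comm _ _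
      _ = ((Vᵀ * (Dν * Dν) * V) * (Wᵀ * (Dμ * Dμ) * W)).trace := by
          congr 1
          simp only [Matrix.mul_assoc]
      _ = ((Wᵀ * (Dμ * Dμ) * W) * (Vᵀ * (Dν * Dν) * V)).trace := Matrix.trace_mul_comm _ _
      _ = _ := by rw [e2, e3]
  rw [htr]
  exact TraceCrossCovarianceAux.main_ineq hmn lμ lν κ hlμpos hlνpos hlμmono hlνmono hκmono W V hV1 hV2 hWW
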